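/- arXiv:2211.09304 — 4 statements merged into one kernel-verified Lean document; each statement's English description precedes it below -/
import Mathlib

section
/- Let n ≥ 8δ − 10k + 4 with k ≥ 1 and δ ≥ 2k + 1. Then ρ(K_{2k} ∇ (K_{δ−2k+1} ∪ K_{n−δ−1})) < ρ(K_δ ∇ (K_{n−2δ+2k−1} ∪ (δ−2k+1)K₁)). -/
/-!
Both graphs are joins `K_s ∇ (H₁ ∪ H₂)` with `Hᵢ` regular, so their three blocks form an equitable
partition: adjacency eigenvectors constant on the blocks come from eigenvectors of the `3 × 3`
quotient matrix, whose characteristic polynomial is an explicit cubic. A root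
`λ₂ > n - δ + 2k - 2` of the cubic of `K_δ ∇ (K_{n-2δ+2k-1} ∪ (δ-2k+1)K₁)` is therefore an
adjacency eigenvalue of that graph, so `λ₂ ≤ ρ₂`. The cubic of `K_{2k} ∇ (K_{δ-2k+1} ∪ K_{n-δ-1})`
is negative at `n - δ - 2` and, reduced modulo the first cubic, visibly positive at `λ₂`; so it
has a root `λ₁ ∈ (n - δ - 2, λ₂)`, and the corresponding eigenvector is positive. A positive
eigenvector of a nonnegative matrix bounds all its real eigenvalues (Collatz–Wielandt), hence
`ρ₁ ≤ λ₁ < λ₂ ≤ ρ₂`.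
-/

open SimpleGraph Matrix

/-- The adjacency spectral radius of a finite graph: the supremum of its
adjacency eigenvalues. -/
noncomputable def specRad {V : Type*} [Fintype V] (G : SimpleGraph V) : ℝ :=
  letI := Classical.decEq V
  letI := Classical.decRel G.Adj
  sSup {t : ℝ | ∃ v : V → ℝ, v ≠ 0 ∧ G.adjMatrix ℝ *ᵥ v = t • v}
/-- The graph `K_d ∇ (K_{n-2d+t-1} ∪ (d-t+1) K₁)` on `Fin n`: the first `d`
vertices are a dominating clique, the next `n-2d+t-1` vertices form a clique,
and the last `d-t+1` vertices are independent. -/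
def joinGraph (n d t : ℕ) : SimpleGraph (Fin n) :=
  SimpleGraph.fromRel (fun x y =>
    x.val < d ∨ (x.val < n - (d - t + 1) ∧ y.val < n - (d - t + 1)))

/-- The graph `K_{2k} ∇ (K_{δ-2k+1} ∪ K_{n-δ-1})` on `Fin n`: the first `2k`
vertices are a dominating clique, the vertices in `[2k, δ+1)` form a clique of
size `δ-2k+1`, and the vertices in `[δ+1, n)` form a clique of size `n-δ-1`. -/
def joinTwoCliques (n k δ : ℕ) : SimpleGraph (Fin n) :=
  SimpleGraph.fromRel (fun x y =>
    x.val < 2 * k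
    ∨ (2 * k ≤ x.val ∧ x.val < δ + 1 ∧ 2 * k ≤ y.val ∧ y.val < δ + 1)
    ∨ (δ + 1 ≤ x.val ∧ δ + 1 ≤ y.val))

open Finset

theorem Fin.card_filter_val_mem_Ico {n a b : ℕ} (hb : b ≤ n) :
    #{x : Fin n | a ≤ x.val ∧ x.val < b} = b - a := by
  rw [← card_map Fin.valEmbedding, ← Nat.card_Ico a b]
  congr 1; ext i
  simp only [mem_map, mem_filter, mem_univ, true_and, Fin.valEmbedding_apply, mem_Ico]
  exact ⟨fun ⟨x, hx, hxi⟩ => hxi ▸ hx, fun hi => ⟨⟨i, by omega⟩, hi, rfl⟩⟩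

theorem Finset.sum_comp_eq_sum_card_fiber_mul {V ι : Type*} [Fintype V] [Fintype ι]
    [DecidableEq ι] (p : V → ι) (f : ι → ℝ) :
    ∑ x, f (p x) = ∑ c, (#{x | p x = c} : ℝ) * f c := by
  rw [← sum_fiberwise univ p]
  refine sum_congr rfl fun c _ => ?_
  rw [sum_congr rfl fun x hx => by rw [(mem_filter.1 hx).2], sum_const, nsmul_eq_mul]

theorem Matrix.eigenvalue_le_of_mulVec_le {V : Type*} [Fintype V] {A : Matrix V V ℝ}
    (hA : ∀ i j, 0 ≤ A i j) {y : V → ℝ} (hy : ∀ i, 0 < y i) {r : ℝ}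
    (hr : ∀ i, (A *ᵥ y) i ≤ r * y i) {t : ℝ} {v : V → ℝ} (hv : v ≠ 0)
    (ht : A *ᵥ v = t • v) : t ≤ r := by
  obtain ⟨j, hj⟩ := Function.ne_iff.mp hv
  -- compare `v` with `y` at a coordinate maximising `|v j| / y j`
  obtain ⟨i, -, hi⟩ := exists_max_image univ (fun j => |v j| / y j) ⟨j, mem_univ j⟩
  set c := |v i| / y i
  have hv_le : ∀ j, |v j| ≤ c * y j := fun j => (div_le_iff₀ (hy j)).1 (hi j (mem_univ j))
  have hvi : |v i| = c * y i := (div_mul_cancel₀ _ (hy i).ne').symm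
  have hc : 0 < c := (div_pos (abs_pos.2 hj) (hy j)).trans_le (hi j (mem_univ j))
  have key : |t| * |v i| ≤ r * |v i| :=
    calc |t| * |v i| = |∑ j, A i j * v j| := by
          rw [← abs_mul, ← smul_eq_mul, ← Pi.smul_apply, ← ht]; rfl
      _ ≤ ∑ j, A i j * |v j| := by
          refine (abs_sum_le_sum_abs _ _).trans_eq (sum_congr rfl fun j _ => ?_)
          rw [abs_mul, abs_of_nonneg (hA i j)]
      _ ≤ ∑ j, A i j * (c * y j) :=
          sum_le_sum fun j _ => mul_le_mul_of_nonneg_left (hv_le j) (hA i j)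
      _ = c * (A *ᵥ y) i := by
          simp only [mulVec, dotProduct, mul_sum]; exact sum_congr rfl fun j _ => by ring
      _ ≤ c * (r * y i) := mul_le_mul_of_nonneg_left (hr i) hc.le
      _ = r * |v i| := by rw [hvi]; ring
  have hvi_pos : 0 < |v i| := by rw [hvi]; exact mul_pos hc (hy i)
  exact (le_abs_self t).trans (le_of_mul_le_mul_right key hvi_pos)

-- The quotient matrix of the blocks `K_s, H₁, H₂` of `K_s ∇ (H₁ ∪ H₂)`, where `Hᵢ` is
-- `rᵢ`-regular on `sᵢ` vertices; `joinCubic` is its characteristic polynomial.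
def joinQuotient (s s₁ r₁ s₂ r₂ : ℝ) : Matrix (Fin 3) (Fin 3) ℝ :=
  !![s - 1, s₁, s₂; s, r₁, 0; s, 0, r₂]

def joinCubic (s s₁ r₁ s₂ r₂ x : ℝ) : ℝ :=
  (x - (s - 1)) * (x - r₁) * (x - r₂) - s * s₁ * (x - r₂) - s * s₂ * (x - r₁)

theorem joinQuotient_mulVec_eq_smul {s s₁ r₁ s₂ r₂ x : ℝ}
    (hx : joinCubic s s₁ r₁ s₂ r₂ x = 0) (hx₁ : x ≠ r₁) (hx₂ : x ≠ r₂) :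
    joinQuotient s s₁ r₁ s₂ r₂ *ᵥ ![1, s / (x - r₁), s / (x - r₂)]
      = x • ![1, s / (x - r₁), s / (x - r₂)] := by
  unfold joinCubic at hx
  have h₁ : x - r₁ ≠ 0 := sub_ne_zero.2 hx₁
  have h₂ : x - r₂ ≠ 0 := sub_ne_zero.2 hx₂
  have row₀ : s - 1 + s₁ * (s / (x - r₁)) + s₂ * (s / (x - r₂)) = x := by
    field_simp; linear_combination -hx
  have row₁ : s + r₁ * (s / (x - r₁)) = x * (s / (x - r₁)) := by field_simp; ring
  have row₂ : s + r₂ * (s / (x - r₂)) = x * (s / (x - r₂)) := by field_simp; ring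
  ext c
  fin_cases c <;> simp [joinQuotient, mulVec, dotProduct, Fin.sum_univ_three, row₀, row₁, row₂]

theorem exists_joinCubic_eq_zero {s s₁ r₁ s₂ r₂ a b : ℝ} (hab : a ≤ b)
    (ha : joinCubic s s₁ r₁ s₂ r₂ a < 0) (hb : 0 < joinCubic s s₁ r₁ s₂ r₂ b) :
    ∃ x ∈ Set.Ioo a b, joinCubic s s₁ r₁ s₂ r₂ x = 0 :=
  intermediate_value_Ioo hab (Continuous.continuousOn (by unfold joinCubic; fun_prop))
    ⟨ha, hb⟩

theorem exists_joinCubic_clique_indep_eq_zero {k δ n : ℝ} (hk : 1 ≤ k) (hδ : 2 * k + 1 ≤ δ)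
    (hn : 3 * δ + 9 ≤ n) :
    ∃ x ∈ Set.Ioo (n - δ + 2 * k - 2) (n - 1),
      joinCubic δ (n - 2 * δ + 2 * k - 1) (n - 2 * δ + 2 * k - 2) (δ - 2 * k + 1) 0 x = 0 := by
  refine exists_joinCubic_eq_zero (by linarith) ?_ ?_
  · have : joinCubic δ (n - 2 * δ + 2 * k - 1) (n - 2 * δ + 2 * k - 2) (δ - 2 * k + 1) 0
        (n - δ + 2 * k - 2) = -(δ ^ 2 * (δ - 2 * k + 1)) := by unfold joinCubic; ring
    rw [this, neg_neg_iff_pos]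
    exact mul_pos (by nlinarith) (by linarith)
  · have : joinCubic δ (n - 2 * δ + 2 * k - 1) (n - 2 * δ + 2 * k - 2) (δ - 2 * k + 1) 0 (n - 1)
        = (δ - 2 * k + 1) * (n * (n - 1) - δ * (2 * δ - 2 * k + 1)) := by unfold joinCubic; ring
    rw [this]
    exact mul_pos (by linarith) (by nlinarith)

theorem joinCubic_cliques_neg {k δ n : ℝ} (hk : 1 ≤ k) (hδ : 2 * k + 1 ≤ δ)
    (hn : 3 * δ + 9 ≤ n) :
    joinCubic (2 * k) (δ - 2 * k + 1) (δ - 2 * k) (n - δ - 1) (n - δ - 2) (n - δ - 2) < 0 := by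
  have : joinCubic (2 * k) (δ - 2 * k + 1) (δ - 2 * k) (n - δ - 1) (n - δ - 2) (n - δ - 2)
      = -(2 * k * (n - δ - 1) * (n - 2 * δ + 2 * k - 2)) := by unfold joinCubic; ring
  rw [this, neg_neg_iff_pos]
  exact mul_pos (mul_pos (by linarith) (by linarith)) (by linarith)

theorem joinCubic_cliques_pos {k δ n x : ℝ} (hk : 1 ≤ k) (hδ : 2 * k + 1 ≤ δ)
    (hn : 3 * δ + 9 ≤ n) (hx : n - δ + 2 * k - 2 < x)
    (hx₀ : joinCubic δ (n - 2 * δ + 2 * k - 1) (n - 2 * δ + 2 * k - 2) (δ - 2 * k + 1) 0 x = 0) :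
    0 < joinCubic (2 * k) (δ - 2 * k + 1) (δ - 2 * k) (n - δ - 1) (n - δ - 2) x := by
  have h₁ : 0 < x - (n - δ + 2 * k - 2) := by linarith
  have h₂ : 0 < x - (n - 2 * δ + 2 * k - 2) := by linarith
  have h₃ : 0 < x - (δ - 2 * k) := by linarith
  have h₄ : 0 < x - (n - δ - 2) := by linarith
  -- modulo the cubic of the other graph, the product is a sum of products of positive factors
  have hid : joinCubic (2 * k) (δ - 2 * k + 1) (δ - 2 * k) (n - δ - 1) (n - δ - 2) x
        * (x * (x - (n - 2 * δ + 2 * k - 2)))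
      = (δ - 2 * k) *
        ((x - (n - δ + 2 * k - 2)) * (n - δ + 2 * k - 1 + (x - (n - δ + 2 * k - 2))) * x
            * (x - (δ - 2 * k))
          + (δ - 2 * k + 1) * (x - δ) * (x - (n - 2 * δ + 2 * k - 2)) * (x - (n - δ - 2))) := by
    unfold joinCubic at hx₀ ⊢
    linear_combination (x - (δ - 2 * k)) * (x - (n - δ - 2)) * hx₀
  have hx_pos : 0 < x * (x - (n - 2 * δ + 2 * k - 2)) := mul_pos (by linarith) h₂
  refine pos_of_mul_pos_left ?_ hx_pos.le
  rw [hid]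
  refine mul_pos (by linarith) (add_pos ?_ ?_)
  · exact mul_pos (mul_pos (mul_pos h₁ (by linarith)) (by linarith)) h₃
  · exact mul_pos (mul_pos (mul_pos (by linarith) (by linarith)) h₂) h₄

namespace SimpleGraph

section SpectralRadius

variable {V : Type*} (G : SimpleGraph V) [DecidableRel G.Adj]

theorem adjMatrix_nonneg (i j : V) : (0 : ℝ) ≤ G.adjMatrix ℝ i j := by
  rw [adjMatrix_apply]; split_ifs <;> norm_num

variable [Fintype V]

theorem specRad_eq_sSup :
    specRad G = sSup {t : ℝ | ∃ v : V → ℝ, v ≠ 0 ∧ G.adjMatrix ℝ *ᵥ v = t • v} := by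
  unfold specRad; congr!

theorem specRad_le_of_mulVec_le [Nonempty V] {y : V → ℝ} (hy : ∀ i, 0 < y i) {r : ℝ}
    (hr : ∀ i, (G.adjMatrix ℝ *ᵥ y) i ≤ r * y i) : specRad G ≤ r := by
  obtain ⟨i⟩ := ‹Nonempty V›
  have hr₀ : 0 ≤ r := nonneg_of_mul_nonneg_left
    ((sum_nonneg fun j _ => mul_nonneg (G.adjMatrix_nonneg i j) (hy j).le).trans (hr i))
    (hy i)
  rw [specRad_eq_sSup]
  exact Real.sSup_le (fun t ⟨v, hv, ht⟩ =>
    Matrix.eigenvalue_le_of_mulVec_le G.adjMatrix_nonneg hy hr hv ht) hr₀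

theorem le_specRad_of_mulVec_eq_smul {v : V → ℝ} (hv : v ≠ 0) {t : ℝ}
    (ht : G.adjMatrix ℝ *ᵥ v = t • v) : t ≤ specRad G := by
  have hbdd : BddAbove {t : ℝ | ∃ v : V → ℝ, v ≠ 0 ∧ G.adjMatrix ℝ *ᵥ v = t • v} :=
    ⟨Fintype.card V, fun t ⟨v, hv, ht⟩ =>
      Matrix.eigenvalue_le_of_mulVec_le G.adjMatrix_nonneg (y := Function.const V 1)
        (fun _ => one_pos)
        (fun i => by
          rw [adjMatrix_mulVec_const_apply, Function.const_apply, mul_one, mul_one]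
          exact_mod_cast (G.degree_lt_card_verts i).le) hv ht⟩
  rw [specRad_eq_sSup]
  exact le_csSup hbdd ⟨v, hv, ht⟩

end SpectralRadius

section Quotient

variable {V ι : Type*} [Fintype V] [Fintype ι] [DecidableEq ι]

-- Entry `(c, d)` is the number of neighbours in block `d` of a vertex of block `c`, for a graph
-- in which distinct vertices are adjacent iff `R` relates their blocks.
def quotientMatrix (p : V → ι) (R : ι → ι → Prop) [DecidableRel R] : Matrix ι ι ℝ :=
  fun c d => if R c d then (#{x | p x = d} : ℝ) - if c = d then 1 else 0 else 0

variable {G : SimpleGraph V} [DecidableRel G.Adj] {p : V → ι} {R : ι → ι → Prop}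
  [DecidableRel R]

theorem adjMatrix_mulVec_comp (hG : ∀ x y, G.Adj x y ↔ x ≠ y ∧ R (p x) (p y)) (w : ι → ℝ) :
    G.adjMatrix ℝ *ᵥ (w ∘ p) = (quotientMatrix p R *ᵥ w) ∘ p := by
  classical
  ext x
  set f : ι → ℝ := fun c => if R (p x) c then w c else 0
  have hrow : (G.adjMatrix ℝ *ᵥ (w ∘ p)) x = ∑ y, f (p y) - f (p x) := by
    rw [← Fintype.sum_ite_eq x fun y => f (p y), ← sum_sub_distrib]
    refine sum_congr rfl fun y _ => ?_
    by_cases hxy : x = y <;> simp [adjMatrix_apply, hG, hxy, f]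
  rw [hrow, Finset.sum_comp_eq_sum_card_fiber_mul p f, ← Fintype.sum_ite_eq (p x) f,
    ← sum_sub_distrib]
  refine sum_congr rfl fun c _ => ?_
  simp only [quotientMatrix, f]
  split_ifs <;> ring

theorem specRad_le_of_quotient [Nonempty V]
    (hG : ∀ x y, G.Adj x y ↔ x ≠ y ∧ R (p x) (p y)) {w : ι → ℝ} (hw : ∀ c, 0 < w c) {r : ℝ}
    (hr : quotientMatrix p R *ᵥ w = r • w) :
    specRad G ≤ r :=
  G.specRad_le_of_mulVec_le (y := w ∘ p) (fun x => hw (p x))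
    fun x => by rw [adjMatrix_mulVec_comp hG, Function.comp_apply, hr]; rfl

theorem le_specRad_of_quotient (hG : ∀ x y, G.Adj x y ↔ x ≠ y ∧ R (p x) (p y))
    {w : ι → ℝ} (hw : w ∘ p ≠ 0) {r : ℝ} (hr : quotientMatrix p R *ᵥ w = r • w) :
    r ≤ specRad G :=
  G.le_specRad_of_mulVec_eq_smul hw (by rw [adjMatrix_mulVec_comp hG, hr]; rfl)

end Quotient

def blockIndex {n : ℕ} (a b : ℕ) (x : Fin n) : Fin 3 :=
  if x.val < a then 0 else if x.val < b then 1 else 2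

theorem card_blockIndex_eq {n a b : ℕ} (hab : a ≤ b) (hbn : b ≤ n) (c : Fin 3) :
    #{x : Fin n | blockIndex a b x = c} = ![a, b - a, n - b] c := by
  have h : ∀ lo hi, hi ≤ n →
      (∀ x : Fin n, blockIndex a b x = c ↔ lo ≤ x.val ∧ x.val < hi) →
      #{x : Fin n | blockIndex a b x = c} = hi - lo := fun lo hi hhi hc => by
    simp only [hc]; exact Fin.card_filter_val_mem_Ico hhi
  fin_cases c
  · exact h 0 a (hab.trans hbn) fun x => by unfold blockIndex; split_ifs <;> grind
  · exact h a b hbn fun x => by unfold blockIndex; split_ifs <;> grind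
  · exact h b n le_rfl fun x => by unfold blockIndex; split_ifs <;> grind

theorem quotientMatrix_blockIndex_cliques {n a b : ℕ} (hab : a ≤ b) (hbn : b ≤ n) :
    quotientMatrix (blockIndex (n := n) a b) (fun i j => i = 0 ∨ j = 0 ∨ i = j)
      = joinQuotient a (b - a) (b - a - 1) (n - b) (n - b - 1) := by
  ext c d
  have := card_blockIndex_eq hab hbn
  fin_cases c <;> fin_cases d <;>
    simp [quotientMatrix, joinQuotient, this, Nat.cast_sub hab, Nat.cast_sub hbn]

theorem quotientMatrix_blockIndex_clique_indep {n a b : ℕ} (hab : a ≤ b) (hbn : b ≤ n) :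
    quotientMatrix (blockIndex (n := n) a b) (fun i j => i = 0 ∨ j = 0 ∨ (i = 1 ∧ j = 1))
      = joinQuotient a (b - a) (b - a - 1) (n - b) 0 := by
  ext c d
  have := card_blockIndex_eq hab hbn
  fin_cases c <;> fin_cases d <;>
    simp [quotientMatrix, joinQuotient, this, Nat.cast_sub hab, Nat.cast_sub hbn]

theorem joinTwoCliques_adj_iff {n k δ : ℕ} (x y : Fin n) :
    (joinTwoCliques n k δ).Adj x y ↔ x ≠ y ∧
      (fun i j : Fin 3 => i = 0 ∨ j = 0 ∨ i = j)
        (blockIndex (2 * k) (δ + 1) x) (blockIndex (2 * k) (δ + 1) y) := by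
  simp only [joinTwoCliques, fromRel_adj, blockIndex]
  split_ifs <;> grind

theorem joinGraph_adj_iff {n d t : ℕ} (x y : Fin n) :
    (joinGraph n d t).Adj x y ↔ x ≠ y ∧
      (fun i j : Fin 3 => i = 0 ∨ j = 0 ∨ (i = 1 ∧ j = 1))
        (blockIndex d (n - (d - t + 1)) x) (blockIndex d (n - (d - t + 1)) y) := by
  simp only [joinGraph, fromRel_adj, blockIndex]
  split_ifs <;> grind

theorem specRad_joinTwoCliques_le {n k δ : ℕ} (hk : 1 ≤ k) (hkδ : 2 * k ≤ δ + 1)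
    (hδn : δ + 1 ≤ n) {x : ℝ}
    (hx : joinCubic (2 * k) (δ - 2 * k + 1) (δ - 2 * k) (n - δ - 1) (n - δ - 2) x = 0)
    (hx₁ : δ - 2 * k < x) (hx₂ : n - δ - 2 < x) :
    specRad (joinTwoCliques n k δ) ≤ x := by
  classical
  have : Nonempty (Fin n) := ⟨⟨0, by omega⟩⟩
  have hk' : (0 : ℝ) < 2 * k := by positivity
  refine specRad_le_of_quotient (p := blockIndex (2 * k) (δ + 1))
    (R := fun i j => i = 0 ∨ j = 0 ∨ i = j) joinTwoCliques_adj_iff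
    (w := ![1, 2 * k / (x - (δ - 2 * k)), 2 * k / (x - (n - δ - 2))]) ?_ ?_
  · intro c
    fin_cases c
    exacts [one_pos, div_pos hk' (sub_pos.2 hx₁), div_pos hk' (sub_pos.2 hx₂)]
  · rw [quotientMatrix_blockIndex_cliques hkδ hδn]
    convert joinQuotient_mulVec_eq_smul hx hx₁.ne' hx₂.ne' using 2
    push_cast [Nat.cast_sub hkδ, Nat.cast_sub hδn]
    ring_nf

theorem le_specRad_joinGraph {n k δ : ℕ} (hδ : 0 < δ) (hkδ : 2 * k ≤ δ)
    (hδn : 2 * δ + 1 ≤ n + 2 * k) {x : ℝ}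
    (hx : joinCubic δ (n - 2 * δ + 2 * k - 1) (n - 2 * δ + 2 * k - 2) (δ - 2 * k + 1) 0 x = 0)
    (hx₁ : x ≠ n - 2 * δ + 2 * k - 2) (hx₂ : x ≠ 0) :
    x ≤ specRad (joinGraph n δ (2 * k)) := by
  classical
  refine le_specRad_of_quotient (p := blockIndex δ (n - (δ - 2 * k + 1)))
    (R := fun i j => i = 0 ∨ j = 0 ∨ (i = 1 ∧ j = 1)) joinGraph_adj_iff
    (w := ![1, δ / (x - (n - 2 * δ + 2 * k - 2)), δ / (x - 0)]) ?_ ?_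
  · intro h
    simpa [blockIndex, hδ] using congrFun h ⟨0, by omega⟩
  · rw [quotientMatrix_blockIndex_clique_indep (by omega) (by omega)]
    convert joinQuotient_mulVec_eq_smul hx hx₁ hx₂ using 2
    push_cast [Nat.cast_sub (by omega : δ - 2 * k + 1 ≤ n), Nat.cast_sub hkδ]
    ring_nf

end SimpleGraph

theorem stmt7 (n k δ : ℕ) (hk : 1 ≤ k) (hδ : 2 * k + 1 ≤ δ)
    (hn : 8 * δ - 10 * k + 4 ≤ n) :
    specRad (joinTwoCliques n k δ) < specRad (joinGraph n δ (2 * k)) := by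
  have hn' : 3 * δ + 9 ≤ n := by omega
  have hkR : (1 : ℝ) ≤ k := by exact_mod_cast hk
  have hδR : 2 * (k : ℝ) + 1 ≤ δ := by exact_mod_cast hδ
  have hnR : 3 * (δ : ℝ) + 9 ≤ n := by exact_mod_cast hn'
  obtain ⟨l₂, ⟨hl₂, -⟩, hroot₂⟩ := exists_joinCubic_clique_indep_eq_zero hkR hδR hnR
  obtain ⟨l₁, ⟨hl₁, hl₁₂⟩, hroot₁⟩ := exists_joinCubic_eq_zero (by linarith)
    (joinCubic_cliques_neg hkR hδR hnR) (joinCubic_cliques_pos hkR hδR hnR hl₂ hroot₂)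
  calc specRad (joinTwoCliques n k δ) ≤ l₁ :=
        specRad_joinTwoCliques_le hk (by omega) (by omega) hroot₁ (by linarith) hl₁
    _ < l₂ := hl₁₂
    _ ≤ specRad (joinGraph n δ (2 * k)) :=
        le_specRad_joinGraph (by omega) (by omega) (by omega) hroot₂ (ne_of_gt (by linarith))
          (ne_of_gt (by linarith))
end

section
/- For n ≥ 4s + 2k + 2 and k ≥ 1 (with s ≥ 1), ρ(K_{s,s+k+1} ∇₁ K_{n/2−s, n/2−s−k−1}) < ρ(K_{s−1,s+k} ∇₁ K_{n/2−s+1, n/2−s−k}). -/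
open SimpleGraph Matrix

/-- The graph `K_{s,s+k+1} ∇₁ K_{n/2-s, n/2-s-k-1}` on `Fin n`.
Part `X = [0, n/2)` with `X₁ = [0, s)`, part `Y = [n/2, n)` with
`Y₁ = [n/2, n/2+s+k+1)`; `X₁` is joined to all of `Y`, and `X₂ = X \ X₁`
is joined to `Y₂ = Y \ Y₁`. -/
def bipJoin (n s k : ℕ) : SimpleGraph (Fin n) :=
  SimpleGraph.fromRel (fun x y =>
    x.val < n / 2 ∧ n / 2 ≤ y.val ∧ (x.val < s ∨ n / 2 + s + k + 1 ≤ y.val))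

open Finset

/-!
Both graphs are blow-ups of the path `Y₁ – X₁ – Y₂ – X₂`, with parts of sizes
`a = |X₁|, b = |Y₁|, c = |X₂|, d = |Y₂|`. An eigenvector of the 4 × 4 quotient lifts to a
nonnegative eigenvector of the graph whose zeros are isolated vertices, and such a vector belongs
to the largest eigenvalue: for any eigenpair `(t, u)`, pairing `|t| |u| ≤ A |u|` with it and using
the symmetry of `A` gives `|t| ≤ ρ`. Its eigenvalue `ρ` satisfies
`ρ⁴ - (ab + ad + cd) ρ² + abcd = 0`, so `ρ²` is the larger root `λ` of that quadratic. Moving from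
`s` to `s - 1` changes the quadratic into one that is negative at `λ_s`, hence `λ_s < λ_{s-1}`.
-/

section PerronVector

variable {V : Type*} [Fintype V] (G : SimpleGraph V) [DecidableRel G.Adj]

lemma specRad_eq_sSup :
    specRad G = sSup {t : ℝ | ∃ v : V → ℝ, v ≠ 0 ∧ G.adjMatrix ℝ *ᵥ v = t • v} := by
  unfold specRad
  congr!

variable {G}

lemma abs_le_of_nonneg_eigenvector {w u : V → ℝ} {ρ t : ℝ} (hρ : 0 ≤ ρ) (hw : 0 ≤ w)
    (hsupp : ∀ i j, G.Adj i j → w i ≠ 0) (hw_eig : G.adjMatrix ℝ *ᵥ w = ρ • w)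
    (hu : u ≠ 0) (hu_eig : G.adjMatrix ℝ *ᵥ u = t • u) : |t| ≤ ρ := by
  set p : V → ℝ := fun i => |u i|
  have hp : |t| • p ≤ G.adjMatrix ℝ *ᵥ p := fun i => calc
    |t| * |u i| = |(t • u) i| := by simp [abs_mul]
    _ = |∑ j ∈ G.neighborFinset i, u j| := by rw [← hu_eig, adjMatrix_mulVec_apply]
    _ ≤ ∑ j ∈ G.neighborFinset i, |u j| := abs_sum_le_sum_abs _ _
    _ = (G.adjMatrix ℝ *ᵥ p) i := (adjMatrix_mulVec_apply ..).symm
  have hpw : 0 ≤ p ⬝ᵥ w := dotProduct_nonneg_of_nonneg (fun i => abs_nonneg _) hw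
  rcases hpw.eq_or_lt with hpw | hpw
  · -- `u` lives on the zeros of `w`, which are isolated vertices
    obtain ⟨i, hi⟩ := Function.ne_iff.mp hu
    have hwi : w i = 0 := by
      have := (sum_eq_zero_iff_of_nonneg fun j _ => mul_nonneg (abs_nonneg (u j)) (hw j)).1
        hpw.symm i (mem_univ i)
      exact (mul_eq_zero.1 this).resolve_left (abs_ne_zero.2 hi)
    have hiso : G.neighborFinset i = ∅ := by
      ext j; simpa using fun h => hsupp i j h hwi
    have : t * u i = 0 := by
      rw [← smul_eq_mul, ← Pi.smul_apply, ← hu_eig, adjMatrix_mulVec_apply, hiso, sum_empty]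
    simp [mul_eq_zero.1 this |>.resolve_right hi, hρ]
  · refine le_of_mul_le_mul_right ?_ hpw
    calc |t| * (p ⬝ᵥ w) = (|t| • p) ⬝ᵥ w := by rw [smul_dotProduct, smul_eq_mul]
      _ ≤ (G.adjMatrix ℝ *ᵥ p) ⬝ᵥ w := dotProduct_le_dotProduct_of_nonneg_right hp hw
      _ = p ⬝ᵥ (G.adjMatrix ℝ *ᵥ w) := by
        rw [dotProduct_comm, dotProduct_mulVec, ← mulVec_transpose, G.isSymm_adjMatrix.eq,
          dotProduct_comm]
      _ = ρ * (p ⬝ᵥ w) := by rw [hw_eig, dotProduct_smul, smul_eq_mul]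

theorem specRad_eq_of_nonneg_eigenvector {w : V → ℝ} {ρ : ℝ} (hρ : 0 ≤ ρ) (hw : 0 ≤ w)
    (hw0 : w ≠ 0) (hsupp : ∀ i j, G.Adj i j → w i ≠ 0) (hw_eig : G.adjMatrix ℝ *ᵥ w = ρ • w) :
    specRad G = ρ := by
  rw [specRad_eq_sSup]
  refine IsGreatest.csSup_eq ⟨⟨w, hw0, hw_eig⟩, ?_⟩
  rintro t ⟨u, hu, hu_eig⟩
  exact (le_abs_self t).trans (abs_le_of_nonneg_eigenvector hρ hw hsupp hw_eig hu hu_eig)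

end PerronVector

lemma adjMatrix_comap_mulVec_comp {ι V : Type*} [Fintype ι] [DecidableEq ι] [Fintype V]
    (H : SimpleGraph ι) [DecidableRel H.Adj] (π : V → ι) (x : ι → ℝ) :
    (H.comap π).adjMatrix ℝ *ᵥ (x ∘ π) =
      (H.adjMatrix ℝ *ᵥ fun q => #{v | π v = q} * x q) ∘ π := by
  ext u
  simp only [mulVec, dotProduct, adjMatrix_apply, comap_adj, Function.comp_apply, ite_mul,
    one_mul, zero_mul]
  rw [← sum_fiberwise univ π]
  refine sum_congr rfl fun q _ => ?_
  rw [sum_congr rfl fun v hv => by rw [(mem_filter.1 hv).2], sum_const, nsmul_eq_mul]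
  split_ifs <;> simp

noncomputable def largerRoot (B C : ℝ) : ℝ := (B + √(B ^ 2 - 4 * C)) / 2

lemma largerRoot_sq {B C : ℝ} (h : 4 * C ≤ B ^ 2) :
    largerRoot B C ^ 2 = B * largerRoot B C - C := by
  have := Real.sq_sqrt (sub_nonneg.2 h)
  unfold largerRoot
  linear_combination this / 4

lemma le_two_mul_largerRoot (B C : ℝ) : B ≤ 2 * largerRoot B C := by
  unfold largerRoot
  linarith [Real.sqrt_nonneg (B ^ 2 - 4 * C)]

lemma lt_largerRoot {B C x : ℝ} (h : x ^ 2 - B * x + C < 0) : x < largerRoot B C := by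
  have : 2 * x - B < √(B ^ 2 - 4 * C) := Real.lt_sqrt_of_sq_lt (by linarith)
  unfold largerRoot
  linarith

noncomputable def joinRoot (a b c d : ℝ) : ℝ := largerRoot (a * b + a * d + c * d) (a * b * c * d)

section joinRoot

variable {a b c d : ℝ}

lemma joinRoot_sq (ha : 0 ≤ a) (hb : 0 ≤ b) (hc : 0 ≤ c) (hd : 0 ≤ d) :
    joinRoot a b c d ^ 2 = (a * b + a * d + c * d) * joinRoot a b c d - a * b * c * d :=
  largerRoot_sq <| by
    nlinarith [sq_nonneg (a * b - c * d), mul_nonneg ha hd, mul_nonneg ha hb, mul_nonneg hc hd]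

lemma mul_lt_joinRoot_left (ha : 0 ≤ a) (hb : 0 < b) (hc : 0 < c) (hd : 0 < d) :
    a * b < joinRoot a b c d := by
  rcases ha.eq_or_lt with rfl | ha
  · have := le_two_mul_largerRoot (0 * b + 0 * d + c * d) (0 * b * c * d)
    unfold joinRoot
    nlinarith [mul_pos hc hd]
  · exact lt_largerRoot <| by nlinarith [mul_pos (mul_pos (mul_pos ha ha) hb) hd]

lemma joinRoot_pos (ha : 0 ≤ a) (hb : 0 < b) (hc : 0 < c) (hd : 0 < d) : 0 < joinRoot a b c d :=
  (mul_nonneg ha hb.le).trans_lt (mul_lt_joinRoot_left ha hb hc hd)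

lemma mul_lt_joinRoot_right (ha : 0 < a) (hc : 0 < c) (hd : 0 < d) :
    c * d < joinRoot a b c d :=
  lt_largerRoot <| by nlinarith [mul_pos (mul_pos (mul_pos ha hc) hd) hd]

end joinRoot

lemma joinRoot_lt_joinRoot_pred {s k N : ℝ} (hs : 1 ≤ s) (hk : 0 ≤ k) (hN : 2 * s + k + 1 ≤ N) :
    joinRoot s (s + k + 1) (N - s) (N - s - k - 1) <
      joinRoot (s - 1) (s - 1 + k + 1) (N - (s - 1)) (N - (s - 1) - k - 1) := by
  set l := joinRoot s (s + k + 1) (N - s) (N - s - k - 1)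
  have hl := joinRoot_sq (a := s) (b := s + k + 1) (c := N - s) (d := N - s - k - 1)
    (by linarith) (by linarith) (by linarith) (by linarith)
  have hcd : (N - s) * (N - s - k - 1) < l :=
    mul_lt_joinRoot_right (by linarith) (by linarith) (by linarith)
  have hgap : 0 < N - 2 * s - k := by linarith
  have hrest : 0 ≤ (N - 2 * s - k) * ((N - s) * N + (N - s - k) * (s - 1)) :=
    mul_nonneg hgap.le (add_nonneg (mul_nonneg (by linarith) (by linarith))
      (mul_nonneg (by linarith) (by linarith)))
  -- `l` is a root of the quadratic `f_s` of `joinRoot`, and `f_{s-1}(l) = f_{s-1}(l) - f_s(l)`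
  --   `= -(N - 2s - k) (l - (N - s) (N - s - k - 1) + (N - s) N + (N - s - k) (s - 1)) < 0`
  apply lt_largerRoot
  linear_combination hl + mul_lt_mul_of_pos_left hcd hgap + hrest

lemma card_fin_filter_eq_sub {n lo hi : ℕ} {P : ℕ → Prop} [DecidablePred P] (hhi : hi ≤ n)
    (hP : ∀ m < n, P m ↔ lo ≤ m ∧ m < hi) : #{v : Fin n | P v} = hi - lo := by
  have : #{v : Fin n | P v} = #{m ∈ range n | P m} := by
    simp only [card_filter]
    exact Fin.sum_univ_eq_sum_range (fun m => if P m then 1 else 0) n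
  rw [this, ← Nat.card_Ico]
  congr 1
  ext m
  simp only [mem_filter, mem_range, mem_Ico]
  constructor
  · exact fun h => (hP m h.1).1 h.2
  · exact fun h => ⟨by omega, (hP m (by omega)).2 h⟩

/-- Blocks `0, 1, 2, 3` stand for `X₁, X₂, Y₁, Y₂`. -/
def bipJoinQuotient : SimpleGraph (Fin 4) :=
  SimpleGraph.fromRel fun p q => p.val < 2 ∧ 2 ≤ q.val ∧ (p = 0 ∨ q = 3)

instance : DecidableRel bipJoinQuotient.Adj := by
  unfold bipJoinQuotient
  infer_instance

lemma bipJoinQuotient_adj_two {q : Fin 4} (h : bipJoinQuotient.Adj 2 q) : q = 0 := by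
  decide +revert

/-- Solves `ρ x₁ = b y₁ + d y₂`, `ρ x₂ = d y₂`, `ρ y₁ = a x₁`, `ρ y₂ = a x₁ + c x₂`; the last
equation holds exactly when `ρ²` is a root of `t² - (ab + ad + cd) t + abcd`. -/
def bipJoinPerronVec (a b d ρ : ℝ) : Fin 4 → ℝ :=
  ![d * ρ ^ 2, d * (ρ ^ 2 - a * b), a * d * ρ, ρ * (ρ ^ 2 - a * b)]

section bipJoinPerronVec

variable {a b c d ρ : ℝ}

lemma bipJoinQuotient_mulVec_perronVec
    (hρ : (ρ ^ 2) ^ 2 = (a * b + a * d + c * d) * ρ ^ 2 - a * b * c * d) :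
    bipJoinQuotient.adjMatrix ℝ *ᵥ (fun q => ![a, c, b, d] q * bipJoinPerronVec a b d ρ q) =
      ρ • bipJoinPerronVec a b d ρ := by
  ext q
  fin_cases q <;>
    simp [bipJoinPerronVec, mulVec, dotProduct, Fin.sum_univ_four, bipJoinQuotient, fromRel_adj]
  · ring
  · ring
  · ring
  · linear_combination -hρ

lemma bipJoinPerronVec_pos (hd : 0 < d) (hρ : 0 < ρ) (hab : a * b < ρ ^ 2)
    {q : Fin 4} (hq : q ≠ 2 ∨ 0 < a) : 0 < bipJoinPerronVec a b d ρ q := by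
  have hgap : 0 < ρ ^ 2 - a * b := by linarith
  fin_cases q
  · exact mul_pos hd (pow_pos hρ 2)
  · exact mul_pos hd hgap
  · exact mul_pos (mul_pos (hq.resolve_left (absurd rfl)) hd) hρ
  · exact mul_pos hρ hgap

lemma bipJoinPerronVec_nonneg (ha : 0 ≤ a) (hd : 0 < d) (hρ : 0 < ρ) (hab : a * b < ρ ^ 2) :
    0 ≤ bipJoinPerronVec a b d ρ := fun q => by
  by_cases hq : q = 2
  · subst hq
    exact mul_nonneg (mul_nonneg ha hd.le) hρ.le
  · exact (bipJoinPerronVec_pos hd hρ hab (.inl hq)).le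

end bipJoinPerronVec

def bipJoinBlock (N a k m : ℕ) : Fin 4 :=
  if m < a then 0 else if m < N then 1 else if m < N + a + k + 1 then 2 else 3

section bipJoinBlock

variable {N a k : ℕ}

lemma lt_of_bipJoinBlock_eq_zero {m : ℕ} (h : bipJoinBlock N a k m = 0) : m < a := by
  unfold bipJoinBlock at h
  split_ifs at h <;> simp_all

lemma bipJoin_eq_comap (h : a + k + 1 ≤ N) :
    bipJoin (N + N) a k = bipJoinQuotient.comap fun v : Fin (N + N) => bipJoinBlock N a k v := by
  ext u v
  have hu := u.isLt
  have hv := v.isLt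
  simp only [bipJoin, bipJoinQuotient, bipJoinBlock, comap_adj, fromRel_adj, Fin.ext_iff,
    show (N + N) / 2 = N by omega]
  split_ifs <;> simp <;> omega

lemma card_bipJoinBlock (h : a + k + 1 ≤ N) (q : Fin 4) :
    (#{v : Fin (N + N) | bipJoinBlock N a k v = q} : ℝ) =
      ![(a : ℝ), N - a, a + k + 1, N - a - k - 1] q := by
  rw [card_fin_filter_eq_sub (P := (bipJoinBlock N a k · = q)) (lo := ![0, a, N, N + a + k + 1] q)
    (hi := ![a, N, N + a + k + 1, N + N] q)]
  · fin_cases q <;> simp <;> rw [Nat.cast_sub (by omega)] <;> push_cast <;> ring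
  · fin_cases q <;> simp <;> omega
  · intro m hm
    fin_cases q <;> simp only [bipJoinBlock] <;> split_ifs <;> simp <;> omega

end bipJoinBlock

lemma specRad_bipJoin {N a k : ℕ} (h : a + k + 1 < N) :
    specRad (bipJoin (N + N) a k) =
      √(joinRoot a (a + k + 1) (N - a) (N - a - k - 1)) := by
  have ha : (0 : ℝ) ≤ a := a.cast_nonneg
  have hb : (0 : ℝ) < a + k + 1 := by positivity
  have hN : (a : ℝ) + k + 1 < N := by exact_mod_cast h
  have hc : (0 : ℝ) < N - a := by linarith
  have hd : (0 : ℝ) < N - a - k - 1 := by linarith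
  have hl := joinRoot_pos ha hb hc hd
  have hab := mul_lt_joinRoot_left ha hb hc hd
  have hquad := joinRoot_sq ha hb.le hc.le hd.le
  rw [← Real.sq_sqrt hl.le] at hab hquad
  have hρ := Real.sqrt_pos.2 hl
  set ρ := √(joinRoot a (a + k + 1) (N - a) (N - a - k - 1))
  rw [bipJoin_eq_comap h.le]
  set x := bipJoinPerronVec a (a + k + 1) (N - a - k - 1) ρ
  set π : Fin (N + N) → Fin 4 := fun v => bipJoinBlock N a k v
  have hpos {q : Fin 4} := bipJoinPerronVec_pos (q := q) hd hρ hab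
  refine specRad_eq_of_nonneg_eigenvector (w := x ∘ π) hρ.le
    (fun v => bipJoinPerronVec_nonneg ha hd hρ hab (π v))
    (Function.ne_iff.2 ⟨⟨a, by omega⟩, (hpos (.inl ?_)).ne'⟩) (fun u v huv => (hpos ?_).ne') ?_
  · simp [π, bipJoinBlock, show a < N by omega]
  · by_cases hu : π u = 2
    · rw [comap_adj, hu] at huv
      exact .inr (Nat.cast_pos.2 ((Nat.zero_le _).trans_lt
        (lt_of_bipJoinBlock_eq_zero (bipJoinQuotient_adj_two huv))))
    · exact .inl hu
  · simp only [adjMatrix_comap_mulVec_comp, π, card_bipJoinBlock h.le]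
    rw [bipJoinQuotient_mulVec_perronVec hquad]
    rfl

theorem stmt8_general (n s k : ℕ) (hs : 1 ≤ s)
    (hn : 4 * s + 2 * k + 2 ≤ n) (hneven : Even n) :
    specRad (bipJoin n s k) < specRad (bipJoin n (s - 1) k) := by
  obtain ⟨N, rfl⟩ := hneven
  rw [specRad_bipJoin (by omega), specRad_bipJoin (by omega), Nat.cast_sub hs, Nat.cast_one]
  have hs' : (1 : ℝ) ≤ s := by exact_mod_cast hs
  have hN : 2 * (s : ℝ) + k + 1 ≤ N := by exact_mod_cast (show 2 * s + k + 1 ≤ N by omega)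
  refine Real.sqrt_lt_sqrt (joinRoot_pos ?_ ?_ ?_ ?_).le
    (joinRoot_lt_joinRoot_pred hs' k.cast_nonneg hN) <;> linarith

theorem stmt8 (n s k : ℕ) (hs : 1 ≤ s) (hk : 1 ≤ k)
    (hn : 4 * s + 2 * k + 2 ≤ n) (hneven : Even n) :
    specRad (bipJoin n s k) < specRad (bipJoin n (s - 1) k) :=
  stmt8_general n s k hs hn hneven
end

section
/- If G is a bipartite graph with m ≥ 1 edges and n vertices, then ρ(G) ≤ √m, with equality if and only if G is isomorphic to K_{p,q} ∪ (n−p−q)K₁ where pq = m. -/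
open SimpleGraph Matrix

/-- The graph `K_{p,q} ∪ (n-p-q) K₁` on `Fin n`: a complete bipartite graph
with parts `[0, p)` and `[p, p+q)`, together with `n - p - q` isolated
vertices. -/
def KpqPlusIsolated (n p q : ℕ) : SimpleGraph (Fin n) :=
  SimpleGraph.fromRel (fun x y => x.val < p ∧ p ≤ y.val ∧ y.val < p + q)

/-! Adjacency eigenvalues of a bipartite graph come in pairs `±λ` (conjugate `A` by the `±1`
diagonal matrix of the bipartition), and their squares sum to `tr A² = 2m`. So a positive
eigenvalue `λ` gives `2λ² ≤ 2m`, and equality forces every other eigenvalue to vanish, i.e.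
`rank A ≤ 2`. Then, for an edge `uv`, every row of `A` is a combination of the rows of `u` and
`v`, which says that `G` is complete bipartite between `N(v)` and `N(u)` plus isolated vertices.
Conversely `K_{p,q}` has the eigenvector `√q` on one side and `√p` on the other, with eigenvalue
`√(pq)`. -/

open Finset

namespace Matrix

variable {n K : Type*} [Fintype n] [Field K]

theorem mem_spectrum_iff_exists_mulVec_eq_smul [DecidableEq n] {A : Matrix n n K} {t : K} :
    t ∈ spectrum K A ↔ ∃ v ≠ 0, A *ᵥ v = t • v := by
  rw [← spectrum_toLin', ← Module.End.hasEigenvalue_iff_mem_spectrum]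
  constructor
  · intro h
    obtain ⟨hv, hv0⟩ := h.exists_hasEigenvector.choose_spec
    exact ⟨_, hv0, by simpa using Module.End.mem_eigenspace_iff.mp hv⟩
  · rintro ⟨v, hv0, hv⟩
    exact Module.End.hasEigenvalue_of_hasEigenvector
      ⟨Module.End.mem_eigenspace_iff.mpr (by simpa using hv), hv0⟩

theorem spectrum_neg_eq_of_mul_mul_eq_neg [DecidableEq n] {A D : Matrix n n K} (hD : D * D = 1)
    (hDA : D * A * D = -A) : spectrum K (-A) = spectrum K A := by
  rw [← hDA]
  exact spectrum.units_conjugate (u := ⟨D, D, hD, hD⟩)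

theorem IsHermitian.sum_eigenvalues_sq [DecidableEq n] {A : Matrix n n ℝ} (hA : A.IsHermitian) :
    ∑ i, hA.eigenvalues i ^ 2 = (A * A).trace := by
  conv_rhs => rw [hA.spectral_theorem]
  simp only [Unitary.conjStarAlgAut_apply]
  set U : Matrix n n ℝ := (hA.eigenvectorUnitary : Matrix n n ℝ)
  have hU : star U * U = 1 := (Unitary.mem_iff.mp hA.eigenvectorUnitary.2).1
  set D : Matrix n n ℝ := diagonal (RCLike.ofReal ∘ hA.eigenvalues)
  have hsq : U * D * star U * (U * D * star U) = U * (D * D) * star U := by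
    simp only [Matrix.mul_assoc, ← Matrix.mul_assoc (star U) U, hU, Matrix.one_mul]
  rw [hsq, trace_mul_cycle, ← Matrix.mul_assoc, hU, Matrix.one_mul, diagonal_mul_diagonal,
    trace_diagonal]
  simp [sq]

theorem apply_eq_of_rank_le_two {A : Matrix n n K} (hA : A.rank ≤ 2) {u v : n}
    (huu : A u u = 0) (hvv : A v v = 0) (huv : A u v = 1) (hvu : A v u = 1) (a b : n) :
    A a b = A a v * A u b + A a u * A v b := by
  have hind : LinearIndependent K ![A u, A v] := by
    refine LinearIndependent.pair_iff.mpr fun x y hxy => ⟨?_, ?_⟩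
    · simpa [huv, hvv] using congrFun hxy v
    · simpa [huu, hvu] using congrFun hxy u
  have hspan : Submodule.span K {A u, A v} = Submodule.span K (Set.range A.row) := by
    refine Submodule.eq_of_le_of_finrank_le
      (Submodule.span_mono (Set.pair_subset ⟨u, rfl⟩ ⟨v, rfl⟩)) ?_
    rw [← rank_eq_finrank_span_row, ← Matrix.range_cons_cons_empty, finrank_span_eq_card hind]
    simpa using hA
  obtain ⟨x, y, hxy⟩ := Submodule.mem_span_pair.mp
    (hspan ▸ Submodule.subset_span ⟨a, rfl⟩ : A a ∈ Submodule.span K {A u, A v})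
  have hx : x = A a v := by simpa [huv, hvv] using congrFun hxy v
  have hy : y = A a u := by simpa [huu, hvu] using congrFun hxy u
  simpa [hx, hy] using (congrFun hxy b).symm

end Matrix

theorem two_mul_sq_le_sum_sq {ι : Type*} [Fintype ι] [DecidableEq ι] {f : ι → ℝ} {i j : ι}
    (hij : i ≠ j) (hf : f j = -f i) : 2 * f i ^ 2 ≤ ∑ k, f k ^ 2 :=
  calc 2 * f i ^ 2 = ∑ k ∈ {i, j}, f k ^ 2 := by rw [sum_pair hij, hf]; ring
    _ ≤ ∑ k, f k ^ 2 := sum_le_univ_sum_of_nonneg fun k => sq_nonneg (f k)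

theorem card_ne_zero_le_two_of_sum_sq_eq {ι : Type*} [Fintype ι] [DecidableEq ι] {f : ι → ℝ}
    {i j : ι} (hij : i ≠ j) (hf : f j = -f i) (h : ∑ k, f k ^ 2 = 2 * f i ^ 2) :
    Fintype.card {k // f k ≠ 0} ≤ 2 := by
  have hrest : ∑ k ∈ {i, j}ᶜ, f k ^ 2 = 0 := by
    have := sum_add_sum_compl {i, j} fun k => f k ^ 2
    rw [sum_pair hij, hf, h] at this
    linarith
  have hsupp : univ.filter (fun k => f k ≠ 0) ⊆ {i, j} := by
    intro k hk
    by_contra hk'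
    refine (mem_filter.mp hk).2 (pow_eq_zero_iff two_ne_zero |>.mp ?_)
    exact (sum_eq_zero_iff_of_nonneg fun k _ => sq_nonneg (f k)).mp hrest k (mem_compl.mpr hk')
  rw [Fintype.card_subtype]
  exact (card_le_card hsupp).trans card_le_two

namespace SimpleGraph

variable {V : Type*} [Fintype V] {G : SimpleGraph V} [DecidableRel G.Adj]

theorem trace_adjMatrix_mul_self (α : Type*) [NonAssocSemiring α] :
    (G.adjMatrix α * G.adjMatrix α).trace = 2 * #G.edgeFinset := by
  simp only [Matrix.trace, Matrix.diag_apply, adjMatrix_mul_self_apply_self]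
  rw [← Nat.cast_sum, sum_degrees_eq_twice_card_edges, Nat.cast_mul, Nat.cast_ofNat]

variable [DecidableEq V]

theorem sum_eigenvalues_adjMatrix_sq :
    ∑ i, (G.isHermitian_adjMatrix ℝ).eigenvalues i ^ 2 = 2 * #G.edgeFinset := by
  rw [Matrix.IsHermitian.sum_eigenvalues_sq, trace_adjMatrix_mul_self]

section Bipartite

variable {s t : Set V} [DecidablePred (· ∈ s)]

theorem spectrum_neg_adjMatrix (hG : G.IsBipartiteWith s t) (K : Type*) [Field K] :
    spectrum K (-G.adjMatrix K) = spectrum K (G.adjMatrix K) := by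
  let D : Matrix V V K := Matrix.diagonal fun v => if v ∈ s then 1 else -1
  refine Matrix.spectrum_neg_eq_of_mul_mul_eq_neg (D := D) ?_ ?_
  · rw [Matrix.diagonal_mul_diagonal, ← Matrix.diagonal_one]
    congr 1
    funext v
    split_ifs <;> norm_num
  · ext a b
    simp only [D, Matrix.mul_diagonal, Matrix.diagonal_mul, Matrix.neg_apply, adjMatrix_apply]
    by_cases hab : G.Adj a b
    · rcases hG.mem_of_adj hab with ⟨ha, hb⟩ | ⟨ha, hb⟩
      · simp [hab, ha, hG.disjoint.notMem_of_mem_right hb]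
      · simp [hab, hb, hG.disjoint.notMem_of_mem_right ha]
    · simp [hab]

theorem neg_mem_spectrum_adjMatrix (hG : G.IsBipartiteWith s t) {K : Type*} [Field K] {x : K}
    (hx : x ∈ spectrum K (G.adjMatrix K)) : -x ∈ spectrum K (G.adjMatrix K) := by
  rwa [← spectrum_neg_adjMatrix hG, ← spectrum.neg_eq, Set.neg_mem_neg]

theorem exists_eigenvalues_adjMatrix_eq_neg (hG : G.IsBipartiteWith s t) {x : ℝ}
    (hx : x ∈ spectrum ℝ (G.adjMatrix ℝ)) (hx0 : x ≠ 0) :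
    ∃ i j, i ≠ j ∧ (G.isHermitian_adjMatrix ℝ).eigenvalues i = x ∧
      (G.isHermitian_adjMatrix ℝ).eigenvalues j = -x := by
  have hnegx := neg_mem_spectrum_adjMatrix hG hx
  rw [(G.isHermitian_adjMatrix ℝ).spectrum_real_eq_range_eigenvalues] at hx hnegx
  obtain ⟨i, hi⟩ := hx
  obtain ⟨j, hj⟩ := hnegx
  refine ⟨i, j, fun hij => hx0 ?_, hi, hj⟩
  rw [hij] at hi
  linarith

theorem le_sqrt_card_edgeFinset_of_mem_spectrum (hG : G.IsBipartiteWith s t) {x : ℝ}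
    (hx : x ∈ spectrum ℝ (G.adjMatrix ℝ)) : x ≤ √(#G.edgeFinset : ℝ) := by
  rcases le_or_gt x 0 with hx0 | hx0
  · exact hx0.trans (Real.sqrt_nonneg _)
  obtain ⟨i, j, hij, hi, hj⟩ := exists_eigenvalues_adjMatrix_eq_neg hG hx hx0.ne'
  have := two_mul_sq_le_sum_sq hij (hj.trans (congrArg Neg.neg hi.symm))
  rw [sum_eigenvalues_adjMatrix_sq, hi] at this
  exact (Real.le_sqrt hx0.le (Nat.cast_nonneg _)).mpr (by linarith)

theorem rank_adjMatrix_le_two_of_sqrt_mem_spectrum (hG : G.IsBipartiteWith s t)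
    (hE : 0 < #G.edgeFinset) (hx : √(#G.edgeFinset : ℝ) ∈ spectrum ℝ (G.adjMatrix ℝ)) : (G.adjMatrix ℝ).rank ≤ 2 := by
  have hpos : (0 : ℝ) < √(#G.edgeFinset : ℝ) := Real.sqrt_pos.mpr (by exact_mod_cast hE)
  obtain ⟨i, j, hij, hi, hj⟩ := exists_eigenvalues_adjMatrix_eq_neg hG hx hpos.ne'
  rw [(G.isHermitian_adjMatrix ℝ).rank_eq_card_non_zero_eigs]
  refine card_ne_zero_le_two_of_sum_sq_eq hij (hj.trans (congrArg Neg.neg hi.symm)) ?_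
  rw [sum_eigenvalues_adjMatrix_sq, hi, Real.sq_sqrt (Nat.cast_nonneg _)]

end Bipartite

end SimpleGraph

section SpecRad

variable {V : Type*} [Fintype V] [DecidableEq V] {G : SimpleGraph V} [DecidableRel G.Adj]

theorem specRad_eq_sSup_spectrum : specRad G = sSup (spectrum ℝ (G.adjMatrix ℝ)) := by
  simp_rw [specRad, ← Matrix.mem_spectrum_iff_exists_mulVec_eq_smul, Set.ofPred_mem_eq]
  congr!

theorem le_specRad_of_mem_spectrum {x : ℝ} (hx : x ∈ spectrum ℝ (G.adjMatrix ℝ)) :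
    x ≤ specRad G := by
  rw [specRad_eq_sSup_spectrum]
  exact le_csSup (Matrix.finite_spectrum _).bddAbove hx

theorem specRad_mem_spectrum [Nonempty V] : specRad G ∈ spectrum ℝ (G.adjMatrix ℝ) := by
  rw [specRad_eq_sSup_spectrum]
  refine Set.Nonempty.csSup_mem ?_ (Matrix.finite_spectrum _)
  rw [(G.isHermitian_adjMatrix ℝ).spectrum_real_eq_range_eigenvalues]
  exact Set.range_nonempty _

theorem specRad_le_sqrt_card_edgeFinset {s t : Set V} [DecidablePred (· ∈ s)]
    (hG : G.IsBipartiteWith s t) : specRad G ≤ √(#G.edgeFinset : ℝ) := by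
  rw [specRad_eq_sSup_spectrum]
  exact Real.sSup_le (fun _ hx => le_sqrt_card_edgeFinset_of_mem_spectrum hG hx)
    (Real.sqrt_nonneg _)

end SpecRad

namespace Finset

variable {V W : Type*} [DecidableEq V] [DecidableEq W]

def blockIndex (s t : Finset V) (v : V) : Fin 3 :=
  if v ∈ s then 0 else if v ∈ t then 1 else 2

theorem blockIndex_eq_zero_iff {s t : Finset V} {v : V} : blockIndex s t v = 0 ↔ v ∈ s := by
  unfold blockIndex
  split_ifs <;> simp_all

theorem blockIndex_eq_one_iff {s t : Finset V} (h : Disjoint s t) {v : V} :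
    blockIndex s t v = 1 ↔ v ∈ t := by
  unfold blockIndex
  by_cases hs : v ∈ s
  · simp [hs, disjoint_left.mp h hs]
  · by_cases ht : v ∈ t <;> simp [hs, ht]

theorem card_blockIndex_eq [Fintype V] {s t : Finset V} (h : Disjoint s t) (k : Fin 3) :
    Fintype.card {v // blockIndex s t v = k} = ![#s, #t, Fintype.card V - #s - #t] k := by
  rw [Fintype.card_subtype]
  fin_cases k
  · simp [blockIndex_eq_zero_iff]
  · simp [blockIndex_eq_one_iff h]
  · have : univ.filter (fun v => blockIndex s t v = 2) = (s ∪ t)ᶜ := by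
      ext v
      simp only [mem_filter, mem_univ, true_and]
      by_cases hs : v ∈ s <;> by_cases ht : v ∈ t <;> simp [blockIndex, hs, ht]
    change #(univ.filter fun v => blockIndex s t v = 2) = Fintype.card V - #s - #t
    rw [this, card_compl, card_union_of_disjoint h, Nat.sub_sub]

theorem exists_equiv_forall_mem_iff [Fintype V] [Fintype W] {s t : Finset V} {s' t' : Finset W}
    (hst : Disjoint s t) (hst' : Disjoint s' t') (hs : #s = #s') (ht : #t = #t')
    (hVW : Fintype.card V = Fintype.card W) :
    ∃ e : V ≃ W, ∀ v, (e v ∈ s' ↔ v ∈ s) ∧ (e v ∈ t' ↔ v ∈ t) := by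
  let e : V ≃ W := Equiv.ofFiberEquiv fun k => Fintype.equivOfCardEq <| by
    rw [card_blockIndex_eq hst, card_blockIndex_eq hst', hs, ht, hVW]
  refine ⟨e, fun v => ?_⟩
  have he : blockIndex s' t' (e v) = blockIndex s t v := Equiv.ofFiberEquiv_map _ v
  rw [← blockIndex_eq_zero_iff, ← blockIndex_eq_zero_iff (t := t), ← blockIndex_eq_one_iff hst',
    ← blockIndex_eq_one_iff hst, he]
  exact ⟨Iff.rfl, Iff.rfl⟩

end Finset

namespace SimpleGraph

variable {V W : Type*}

structure IsCompleteBipartiteWith (G : SimpleGraph V) (s t : Finset V) : Prop where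
  disjoint : Disjoint s t
  adj_iff (v w : V) : G.Adj v w ↔ v ∈ s ∧ w ∈ t ∨ v ∈ t ∧ w ∈ s

namespace IsCompleteBipartiteWith

variable {G : SimpleGraph V} {H : SimpleGraph W} {s t : Finset V}

theorem isBipartiteWith (h : G.IsCompleteBipartiteWith s t) : G.IsBipartiteWith s t :=
  ⟨disjoint_coe.mpr h.disjoint, fun v w hvw => by simpa using (h.adj_iff v w).mp hvw⟩

theorem of_iso (φ : G ≃g H) {s t : Finset W} (h : H.IsCompleteBipartiteWith s t) :
    G.IsCompleteBipartiteWith (s.map φ.symm.toEquiv.toEmbedding)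
      (t.map φ.symm.toEquiv.toEmbedding) :=
  ⟨(disjoint_map _).mpr h.disjoint, fun v w => by
    rw [← φ.map_adj_iff, h.adj_iff]
    simp only [mem_map_equiv]
    rfl⟩

theorem nonempty_iso [Fintype V] [Fintype W] [DecidableEq V] [DecidableEq W]
    (hG : G.IsCompleteBipartiteWith s t) {s' t' : Finset W} (hH : H.IsCompleteBipartiteWith s' t')
    (hs : #s = #s') (ht : #t = #t') (hVW : Fintype.card V = Fintype.card W) :
    Nonempty (G ≃g H) := by
  obtain ⟨e, he⟩ := exists_equiv_forall_mem_iff hG.disjoint hH.disjoint hs ht hVW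
  exact ⟨⟨e, fun {a b} => by
    rw [hH.adj_iff, hG.adj_iff, (he a).1, (he a).2, (he b).1, (he b).2]⟩⟩

variable [Fintype V]

theorem card_add_card_le [DecidableEq V] (h : G.IsCompleteBipartiteWith s t) :
    #s + #t ≤ Fintype.card V :=
  card_union_of_disjoint h.disjoint ▸ card_le_univ _

variable [DecidableRel G.Adj] {v : V}

theorem neighborFinset_eq_of_mem_left (h : G.IsCompleteBipartiteWith s t) (hv : v ∈ s) :
    G.neighborFinset v = t := by
  ext w
  simp [h.adj_iff, hv, Finset.disjoint_left.mp h.disjoint hv]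

theorem neighborFinset_eq_of_mem_right (h : G.IsCompleteBipartiteWith s t) (hv : v ∈ t) :
    G.neighborFinset v = s := by
  ext w
  simp [h.adj_iff, hv, Finset.disjoint_right.mp h.disjoint hv]

theorem neighborFinset_eq_empty (h : G.IsCompleteBipartiteWith s t) (hs : v ∉ s) (ht : v ∉ t) :
    G.neighborFinset v = ∅ := by
  ext w
  simp [h.adj_iff, hs, ht]

theorem card_edgeFinset (h : G.IsCompleteBipartiteWith s t) : #G.edgeFinset = #s * #t := by
  rw [← isBipartiteWith_sum_degrees_eq_card_edges h.isBipartiteWith,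
    sum_congr rfl fun v hv => by rw [← card_neighborFinset_eq_degree,
      h.neighborFinset_eq_of_mem_left hv], sum_const, smul_eq_mul]

theorem sqrt_card_edgeFinset_mem_spectrum [DecidableEq V] (h : G.IsCompleteBipartiteWith s t)
    (hE : 0 < #G.edgeFinset) : √(#G.edgeFinset : ℝ) ∈ spectrum ℝ (G.adjMatrix ℝ) := by
  rw [h.card_edgeFinset] at hE
  have hs : s.Nonempty := card_pos.mp (Nat.pos_of_mul_pos_right hE)
  have ht : t.Nonempty := card_pos.mp (Nat.pos_of_mul_pos_left hE)
  rw [h.card_edgeFinset, Nat.cast_mul, Matrix.mem_spectrum_iff_exists_mulVec_eq_smul]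
  set w : V → ℝ := fun v => if v ∈ s then √(#t : ℝ) else if v ∈ t then √(#s : ℝ) else 0
  have hws : ∀ v ∈ s, w v = √(#t : ℝ) := fun v hv => if_pos hv
  have hwt : ∀ v ∈ t, w v = √(#s : ℝ) := fun v hv =>
    (if_neg (disjoint_right.mp h.disjoint hv)).trans (if_pos hv)
  have hsq : √(#s * #t : ℝ) = √(#s : ℝ) * √(#t : ℝ) := Real.sqrt_mul (Nat.cast_nonneg _) _
  obtain ⟨a, ha⟩ := hs
  refine ⟨w, fun h0 => ?_, funext fun v => ?_⟩
  · have := congrFun h0 a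
    rw [hws a ha, Pi.zero_apply, Real.sqrt_eq_zero (Nat.cast_nonneg _)] at this
    exact ht.card_pos.ne' (by exact_mod_cast this)
  rw [adjMatrix_mulVec_apply, Pi.smul_apply, smul_eq_mul, hsq]
  by_cases hvs : v ∈ s
  · rw [h.neighborFinset_eq_of_mem_left hvs, sum_congr rfl hwt, hws v hvs, sum_const,
      nsmul_eq_mul]
    linear_combination (-√(#s : ℝ)) * Real.mul_self_sqrt (Nat.cast_nonneg (α := ℝ) #t)
  by_cases hvt : v ∈ t
  · rw [h.neighborFinset_eq_of_mem_right hvt, sum_congr rfl hws, hwt v hvt, sum_const,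
      nsmul_eq_mul]
    linear_combination (-√(#t : ℝ)) * Real.mul_self_sqrt (Nat.cast_nonneg (α := ℝ) #s)
  · rw [h.neighborFinset_eq_empty hvs hvt, sum_empty]
    simp [w, hvs, hvt]

end IsCompleteBipartiteWith

theorem isCompleteBipartiteWith_KpqPlusIsolated {n p q : ℕ} :
    (KpqPlusIsolated n p q).IsCompleteBipartiteWith ({x | (x : ℕ) < p} : Finset (Fin n))
      (({x | (x : ℕ) < p + q} : Finset (Fin n)) \ ({x | (x : ℕ) < p} : Finset (Fin n))) := by
  refine ⟨disjoint_sdiff, fun x y => ?_⟩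
  simp only [KpqPlusIsolated, fromRel_adj, mem_sdiff, mem_filter, mem_univ, true_and, ne_eq,
    Fin.ext_iff]
  omega

theorem IsCompleteBipartiteWith.nonempty_iso_KpqPlusIsolated [Fintype V] [DecidableEq V]
    {G : SimpleGraph V} {s t : Finset V} (h : G.IsCompleteBipartiteWith s t) :
    Nonempty (G ≃g KpqPlusIsolated (Fintype.card V) #s #t) := by
  have hst := h.card_add_card_le
  refine h.nonempty_iso isCompleteBipartiteWith_KpqPlusIsolated ?_ ?_ (Fintype.card_fin _).symm
  · rw [Fin.card_filter_val_lt]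
    omega
  · have hsub : ({x | (x : ℕ) < #s} : Finset (Fin (Fintype.card V))) ⊆
        ({x | (x : ℕ) < #s + #t} : Finset (Fin (Fintype.card V))) :=
      fun x hx => by
        simp only [mem_filter, mem_univ, true_and] at hx ⊢
        omega
    rw [card_sdiff_of_subset hsub, Fin.card_filter_val_lt, Fin.card_filter_val_lt]
    omega

theorem isCompleteBipartiteWith_of_rank_adjMatrix_le_two [Fintype V] {G : SimpleGraph V}
    [DecidableRel G.Adj] (hrank : (G.adjMatrix ℝ).rank ≤ 2)
    {u v : V} (huv : G.Adj u v) :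
    G.IsCompleteBipartiteWith (G.neighborFinset v) (G.neighborFinset u) := by
  have hadj (a b : V) : G.Adj a b ↔ G.Adj v a ∧ G.Adj u b ∨ G.Adj u a ∧ G.Adj v b := by
    have hab := Matrix.apply_eq_of_rank_le_two hrank (u := u) (v := v) (by simp) (by simp)
      (by simp [huv]) (by simp [huv.symm]) a b
    simp only [adjMatrix_apply, G.adj_comm v a, G.adj_comm u a] at hab ⊢
    by_cases h1 : G.Adj a v <;> by_cases h2 : G.Adj a u <;> by_cases h3 : G.Adj u b <;>
      by_cases h4 : G.Adj v b <;> by_cases h5 : G.Adj a b <;>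
      simp [h1, h2, h3, h4, h5, one_add_one_eq_two] at hab ⊢
  refine ⟨Finset.disjoint_left.mpr fun w hv hu => ?_, fun a b => by simpa using hadj a b⟩
  rw [mem_neighborFinset] at hv hu
  exact G.loopless.irrefl w ((hadj w w).mpr (Or.inl ⟨hv, hu⟩))

end SimpleGraph

theorem stmt13 {V : Type*} [Fintype V] (G : SimpleGraph V) (m : ℕ)
    (hbip : ∃ X : Set V, ∀ u v, G.Adj u v → (u ∈ X ↔ v ∉ X))
    (hm : G.edgeSet.ncard = m) (hm1 : 1 ≤ m) :
    specRad G ≤ Real.sqrt m ∧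
      (specRad G = Real.sqrt m ↔
        ∃ p q, p * q = m ∧ p + q ≤ Fintype.card V ∧
          Nonempty (G ≃g KpqPlusIsolated (Fintype.card V) p q)) := by
  classical
  obtain ⟨X, hX⟩ := hbip
  have hG : G.IsBipartiteWith X Xᶜ :=
    ⟨disjoint_compl_right, fun u v huv => by by_cases hu : u ∈ X <;> simp_all [hX u v huv]⟩
  obtain rfl : #G.edgeFinset = m := by rw [← hm, ← coe_edgeFinset, Set.ncard_coe_finset]
  refine ⟨specRad_le_sqrt_card_edgeFinset hG, fun h => ?_, ?_⟩
  · obtain ⟨u, v, huv⟩ := ne_bot_iff_exists_adj.mp (edgeFinset_nonempty.mp (card_pos.mp hm1))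
    have : Nonempty V := ⟨u⟩
    have hrank := rank_adjMatrix_le_two_of_sqrt_mem_spectrum hG hm1 (h ▸ specRad_mem_spectrum)
    have hK := isCompleteBipartiteWith_of_rank_adjMatrix_le_two hrank huv
    exact ⟨_, _, hK.card_edgeFinset.symm, hK.card_add_card_le, hK.nonempty_iso_KpqPlusIsolated⟩
  · rintro ⟨p, q, -, -, ⟨φ⟩⟩
    have hK := isCompleteBipartiteWith_KpqPlusIsolated.of_iso φ
    exact le_antisymm (specRad_le_sqrt_card_edgeFinset hG)
      (le_specRad_of_mem_spectrum (hK.sqrt_card_edgeFinset_mem_spectrum hm1))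
end

section
/- A bipartite graph G = (A,B) contains an f-factor if and only if Σ_{x∈A} f(x) = Σ_{y∈B} f(y) and for every subset X ⊆ A, Σ_{x∈X} f(x) ≤ Σ_{y∈N(X)} min{f(y), d_X(y)}, where d_X(y) = |N(y) ∩ X|. -/
/-!
Necessity is double counting: the degrees of `H` summed over `A` and over `Aᶜ` both count the
edges of `H`, and the `H`-edges between `X` and a vertex `y` number at most `f y` and at most
`d_X(y)`.

Sufficiency follows Ore's reduction to Hall's theorem. Take `f a` copies of every `a ∈ A` and one
node for every edge `ab` with `a ∈ A` on the left, `f b` copies of every `b ∉ A` and again one node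
per edge on the right. A copy of `a` may be matched to any edge at `a`, and the edge node `ab` to
itself or to a copy of `b`. Both sides have the same size, so a left-saturating matching is
perfect, and the edges not matched to themselves form the `f`-factor. Hall's condition for a set
of copies over `X` and a set `F` of edge nodes reduces to the given inequality for `X`: the
neighbourhood contains every copy of an endpoint outside `A` of an edge of `F` and every edge at
`X`.
-/

open Finset

theorem Finset.exists_injective_of_forall_card_le_card_biUnion {ι α : Type*} [DecidableEq α]
    (L : Finset ι) (t : ι → Finset α) (h : ∀ s ⊆ L, #s ≤ #(s.biUnion t)) :
    ∃ g : L → α, Function.Injective g ∧ ∀ x : L, g x ∈ t x := by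
  refine (all_card_le_biUnion_card_iff_exists_injective _).1 fun s => ?_
  classical
  have := h (s.map (.subtype _)) fun x hx => by obtain ⟨y, -, rfl⟩ := mem_map.1 hx; exact y.2
  rwa [card_map, map_eq_image, image_biUnion] at this

namespace SimpleGraph

section

variable {V : Type*} [Fintype V] {G : SimpleGraph V} {f : V → ℕ}

lemma sum_card_filter_adj_eq_sum_degree (H : SimpleGraph V) [DecidableRel H.Adj] (X : Finset V) :
    ∑ y, #{x ∈ X | H.Adj x y} = ∑ x ∈ X, #{y | H.Adj x y} :=
  (sum_card_bipartiteAbove_eq_sum_card_bipartiteBelow H.Adj).symm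

theorem sum_eq_sum_compl_of_factor [DecidableEq V] {A : Finset V}
    (hbip : ∀ u v, G.Adj u v → (u ∈ A ↔ v ∉ A)) {H : SimpleGraph V} [DecidableRel H.Adj]
    (hHG : H ≤ G) (hdeg : ∀ v, #{w | H.Adj v w} = f v) :
    ∑ a ∈ A, f a = ∑ b ∈ Aᶜ, f b := by
  have hA : ∀ y ∈ A, #{x ∈ A | H.Adj x y} = 0 := fun y hy => by
    simpa using fun x hx hxy => (hbip x y (hHG hxy)).1 hx hy
  have hAc : ∀ y ∈ Aᶜ, #{x ∈ A | H.Adj x y} = f y := fun y hy => by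
    rw [← hdeg]
    congr 1
    ext x
    simp only [mem_filter, mem_univ, true_and, H.adj_comm y]
    exact ⟨And.right, fun h => ⟨(hbip x y (hHG h)).2 (mem_compl.1 hy), h⟩⟩
  calc ∑ a ∈ A, f a = ∑ y, #{x ∈ A | H.Adj x y} := by
        simp_rw [← hdeg, sum_card_filter_adj_eq_sum_degree]
    _ = ∑ b ∈ Aᶜ, f b := by
        rw [← sum_compl_add_sum A, sum_congr rfl hA, sum_congr rfl hAc, sum_const_zero, add_zero]

variable [DecidableRel G.Adj]

theorem sum_le_sum_min_card_of_factor {H : SimpleGraph V} [DecidableRel H.Adj] (hHG : H ≤ G)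
    (hdeg : ∀ v, #{w | H.Adj v w} = f v) (X : Finset V) :
    ∑ x ∈ X, f x ≤ ∑ y, min (f y) #{x ∈ X | G.Adj x y} := by
  simp_rw [← hdeg, ← sum_card_filter_adj_eq_sum_degree]
  refine sum_le_sum fun y _ => le_min ?_ ?_
  · exact card_le_card fun x hx => by simpa [adj_comm] using (mem_filter.1 hx).2
  · exact card_le_card <| monotone_filter_right _ fun _ _ h => hHG h

variable (G) in
def arcsFrom (X : Finset V) : Finset (V × V) := {p ∈ X ×ˢ univ | G.Adj p.1 p.2}

@[simp]
lemma mem_arcsFrom {X : Finset V} {p : V × V} : p ∈ G.arcsFrom X ↔ p.1 ∈ X ∧ G.Adj p.1 p.2 := by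
  simp [arcsFrom]

lemma arcsFrom_mono {X Y : Finset V} (h : X ⊆ Y) : G.arcsFrom X ⊆ G.arcsFrom Y :=
  filter_subset_filter _ (product_subset_product_left h)

theorem sum_min_card_le_sum_image_snd_add_card_sdiff [DecidableEq V] (X : Finset V)
    (F : Finset (V × V)) :
    ∑ y, min (f y) #{x ∈ X | G.Adj x y} ≤ ∑ y ∈ F.image Prod.snd, f y + #(G.arcsFrom X \ F) := by
  set Y := F.image Prod.snd
  calc ∑ y, min (f y) #{x ∈ X | G.Adj x y}
      = ∑ y ∈ Y, min (f y) #{x ∈ X | G.Adj x y} + ∑ y ∈ Yᶜ, min (f y) #{x ∈ X | G.Adj x y} :=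
        (sum_add_sum_compl Y _).symm
    _ ≤ ∑ y ∈ Y, f y + ∑ y ∈ Yᶜ, #{x ∈ X | G.Adj x y} := by
        gcongr <;> simp
    _ = ∑ y ∈ Y, f y + #{p ∈ X ×ˢ Yᶜ | G.Adj p.1 p.2} := by
        simp only [card_filter, sum_product_right]
    _ ≤ ∑ y ∈ Y, f y + #(G.arcsFrom X \ F) := by
        gcongr
        intro p hp
        simp only [mem_filter, mem_product, mem_compl, Y, mem_image, not_exists, not_and] at hp
        simp only [mem_sdiff, mem_arcsFrom]
        exact ⟨⟨hp.1.1, hp.2⟩, fun hpF => hp.1.2 p hpF rfl⟩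

theorem exists_factor_of_arcsFrom [DecidableEq V] {A : Finset V}
    (hbip : ∀ u v, G.Adj u v → (u ∈ A ↔ v ∉ A)) {U : Finset (V × V)} (hU : U ⊆ G.arcsFrom A)
    (hout : ∀ a ∈ A, #{w | (a, w) ∈ U} = f a) (hin : ∀ b ∉ A, #{w | (w, b) ∈ U} = f b) :
    ∃ H ≤ G, ∀ v, (H.neighborSet v).ncard = f v := by
  have hUA : ∀ {u w}, (u, w) ∈ U → u ∈ A ∧ w ∉ A ∧ G.Adj u w := fun h => by
    obtain ⟨hu, hadj⟩ := mem_arcsFrom.1 (hU h)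
    exact ⟨hu, (hbip _ _ hadj).1 hu, hadj⟩
  refine ⟨fromRel fun u w => (u, w) ∈ U, fun u w h => ?_, fun v => ?_⟩
  · rcases ((fromRel_adj _ _ _).1 h).2 with h | h
    exacts [(hUA h).2.2, (hUA h).2.2.symm]
  by_cases hv : v ∈ A
  · rw [← hout v hv, ← Set.ncard_coe_finset]
    congr 1
    ext w
    simp only [mem_neighborSet, fromRel_adj, coe_filter, mem_univ, true_and, Set.mem_ofPred_eq]
    refine ⟨fun h => h.2.resolve_right fun h' => (hUA h').2.1 hv, fun h => ⟨(hUA h).2.2.ne, .inl h⟩⟩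
  · rw [← hin v hv, ← Set.ncard_coe_finset]
    congr 1
    ext w
    simp only [mem_neighborSet, fromRel_adj, coe_filter, mem_univ, true_and, Set.mem_ofPred_eq]
    refine ⟨fun h => h.2.resolve_left fun h' => hv (hUA h').1, fun h => ⟨(hUA h).2.2.ne', .inr h⟩⟩

end

namespace FactorGadget

variable {V : Type*}

/-- `inl ⟨v, i⟩` is the `i`-th copy of the vertex `v`, `inr (a, b)` the node of the edge `ab`. -/
abbrev Node (V : Type*) := ((_ : V) × ℕ) ⊕ (V × V)

def copies (f : V → ℕ) (S : Finset V) : Finset ((_ : V) × ℕ) := S.sigma fun v => range (f v)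

@[simp]
lemma mem_copies {f : V → ℕ} {S : Finset V} {c : (_ : V) × ℕ} :
    c ∈ copies f S ↔ c.1 ∈ S ∧ c.2 < f c.1 := by
  simp [copies]

lemma card_copies (f : V → ℕ) (S : Finset V) : #(copies f S) = ∑ v ∈ S, f v := by
  simp [copies]

variable [Fintype V] [DecidableEq V] (G : SimpleGraph V) [DecidableRel G.Adj] (A : Finset V)
  (f : V → ℕ)

def left : Finset (Node V) := (copies f A).disjSum (G.arcsFrom A)

def right : Finset (Node V) := (copies f Aᶜ).disjSum (G.arcsFrom A)

def nbr : Node V → Finset (Node V)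
  | .inl c => (∅ : Finset _).disjSum (G.arcsFrom {c.1})
  | .inr e => (copies f {e.2}).disjSum {e}

variable {G A f}

theorem card_left_eq_card_right (hsum : ∑ a ∈ A, f a = ∑ b ∈ Aᶜ, f b) :
    #(left G A f) = #(right G A f) := by
  simp only [left, right, card_disjSum, card_copies, hsum]

theorem nbr_subset_right (hbip : ∀ u v, G.Adj u v → (u ∈ A ↔ v ∉ A)) :
    ∀ x ∈ left G A f, nbr G f x ⊆ right G A f
  | .inl c, hc => by
    have hcA : c.1 ∈ A := (mem_copies.1 (inl_mem_disjSum.1 hc)).1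
    exact disjSum_mono (empty_subset _) (arcsFrom_mono (singleton_subset_iff.2 hcA))
  | .inr e, he => by
    obtain ⟨heA, hadj⟩ := mem_arcsFrom.1 (inr_mem_disjSum.1 he)
    have hbA : e.2 ∈ Aᶜ := mem_compl.2 ((hbip _ _ hadj).1 heA)
    exact disjSum_mono (sigma_mono (singleton_subset_iff.2 hbA) fun _ => subset_rfl)
      (singleton_subset_iff.2 (inr_mem_disjSum.1 he))

theorem card_le_card_biUnion_nbr
    (hX : ∀ X ⊆ A, ∑ x ∈ X, f x ≤ ∑ y, min (f y) #{x ∈ X | G.Adj x y})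
    {s : Finset (Node V)} (hs : s ⊆ left G A f) : #s ≤ #(s.biUnion (nbr G f)) := by
  have hsl := (subset_disjSum.1 hs).1
  set X := s.toLeft.image Sigma.fst
  set F := s.toRight
  have hXA : X ⊆ A := by
    intro x hx
    obtain ⟨c, hc, rfl⟩ := mem_image.1 hx
    exact (mem_copies.1 (hsl hc)).1
  have hcopies : #s.toLeft ≤ ∑ x ∈ X, f x := by
    rw [← card_copies]
    exact card_le_card fun c hc => mem_copies.2 ⟨mem_image_of_mem _ hc, (mem_copies.1 (hsl hc)).2⟩
  have hnbr : (copies f (F.image Prod.snd)).disjSum (G.arcsFrom X ∪ F) ⊆ s.biUnion (nbr G f) := by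
    refine disjSum_subset.2 ⟨fun c hc => ?_, fun e he => ?_⟩
    · obtain ⟨hcY, hcf⟩ := mem_copies.1 hc
      obtain ⟨e, he, hce⟩ := mem_image.1 hcY
      exact mem_toLeft.2 (mem_biUnion.2 ⟨.inr e, mem_toRight.1 he, by simp [nbr, hce, hcf]⟩)
    · refine mem_toRight.2 (mem_biUnion.2 ?_)
      rcases mem_union.1 he with he | he
      · obtain ⟨heX, hadj⟩ := mem_arcsFrom.1 he
        obtain ⟨c, hc, hce⟩ := mem_image.1 heX
        exact ⟨.inl c, mem_toLeft.1 hc, by simp [nbr, hce, hadj]⟩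
      · exact ⟨.inr e, mem_toRight.1 he, by simp [nbr]⟩
  calc #s = #s.toLeft + #F := card_toLeft_add_card_toRight.symm
    _ ≤ ∑ x ∈ X, f x + #F := by gcongr
    _ ≤ ∑ y ∈ F.image Prod.snd, f y + #(G.arcsFrom X \ F) + #F := by
        gcongr
        exact (hX X hXA).trans (sum_min_card_le_sum_image_snd_add_card_sdiff X F)
    _ = #((copies f (F.image Prod.snd)).disjSum (G.arcsFrom X ∪ F)) := by
        rw [card_disjSum, card_copies, add_assoc, card_sdiff_add_card]
    _ ≤ #(s.biUnion (nbr G f)) := card_le_card hnbr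

variable (G A f) in
structure IsPerfectMatching (M : Node V → Node V) : Prop where
  injOn : Set.InjOn M (left G A f)
  mem_nbr : ∀ x ∈ left G A f, M x ∈ nbr G f x
  surjOn : Set.SurjOn M (left G A f) (right G A f)

variable (G A) in
def usedArcs (M : Node V → Node V) : Finset (V × V) := {e ∈ G.arcsFrom A | M (.inr e) ≠ .inr e}

variable {M : Node V → Node V}

theorem IsPerfectMatching.mem_usedArcs (hM : IsPerfectMatching G A f M) {x : Node V}
    {e : V × V} (hx : x ∈ left G A f) (he : e ∈ G.arcsFrom A) (hxe : x ≠ .inr e)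
    (hMx : M x = .inr e) : e ∈ usedArcs G A M :=
  mem_filter.2 ⟨he, fun h => hxe (hM.injOn hx (inr_mem_disjSum.2 he) (hMx.trans h.symm))⟩

theorem IsPerfectMatching.apply_inl (hM : IsPerfectMatching G A f M) {c : (_ : V) × ℕ}
    (hc : c ∈ copies f A) : ∃ w, (c.1, w) ∈ usedArcs G A M ∧ M (.inl c) = .inr (c.1, w) := by
  have hcL : .inl c ∈ left G A f := inl_mem_disjSum.2 hc
  have hmem := hM.mem_nbr _ hcL
  rcases h : M (.inl c) with c' | ⟨u, w⟩
  · simp [h, nbr] at hmem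
  · obtain ⟨rfl, hadj⟩ : u = c.1 ∧ G.Adj u w := by simpa [h, nbr] using hmem
    refine ⟨w, hM.mem_usedArcs hcL ?_ Sum.inl_ne_inr h, rfl⟩
    exact mem_arcsFrom.2 ⟨(mem_copies.1 hc).1, hadj⟩

theorem IsPerfectMatching.apply_inr (hM : IsPerfectMatching G A f M) {e : V × V}
    (he : e ∈ usedArcs G A M) : ∃ c ∈ copies f {e.2}, M (.inr e) = .inl c := by
  obtain ⟨heA, hMe⟩ := mem_filter.1 he
  have hmem := hM.mem_nbr _ (inr_mem_disjSum.2 heA)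
  rcases h : M (.inr e) with c | e'
  · exact ⟨c, by simpa [h, nbr] using hmem, rfl⟩
  · obtain rfl : e' = e := by simpa [h, nbr] using hmem
    exact absurd h hMe

theorem IsPerfectMatching.exists_apply_inl_eq (hM : IsPerfectMatching G A f M) {e : V × V}
    (he : e ∈ usedArcs G A M) : ∃ c ∈ copies f {e.1}, M (.inl c) = .inr e := by
  obtain ⟨heA, hMe⟩ := mem_filter.1 he
  obtain ⟨x, hx, hMx⟩ := hM.surjOn (inr_mem_disjSum.2 heA)
  have hmem := hM.mem_nbr x hx
  rw [hMx] at hmem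
  rcases x with c | e'
  · obtain ⟨he1, -⟩ : e.1 = c.1 ∧ G.Adj e.1 e.2 := by simpa [nbr] using hmem
    exact ⟨c, mem_copies.2 ⟨mem_singleton.2 he1.symm, (mem_copies.1 (inl_mem_disjSum.1 hx)).2⟩, hMx⟩
  · obtain rfl : e = e' := by simpa [nbr] using hmem
    exact absurd hMx hMe

theorem IsPerfectMatching.exists_apply_inr_eq (hM : IsPerfectMatching G A f M)
    {c : (_ : V) × ℕ} (hc : c ∈ copies f Aᶜ) :
    ∃ e ∈ usedArcs G A M, e.2 = c.1 ∧ M (.inr e) = .inl c := by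
  obtain ⟨x, hx, hMx⟩ := hM.surjOn (inl_mem_disjSum.2 hc)
  have hmem := hM.mem_nbr x hx
  rw [hMx] at hmem
  rcases x with c' | e
  · simp [nbr] at hmem
  · obtain ⟨hce, -⟩ : c.1 = e.2 ∧ c.2 < f c.1 := by simpa [nbr] using hmem
    exact ⟨e, mem_filter.2 ⟨inr_mem_disjSum.1 hx, by simp [hMx]⟩, hce.symm, hMx⟩

theorem IsPerfectMatching.card_usedArcs_out (hM : IsPerfectMatching G A f M) {a : V}
    (ha : a ∈ A) : #{w | (a, w) ∈ usedArcs G A M} = f a := by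
  have hcA : ∀ c ∈ copies f {a}, c ∈ copies f A := fun c hc => by
    simp only [mem_copies, mem_singleton] at hc ⊢
    exact ⟨hc.1 ▸ ha, hc.2⟩
  calc #{w | (a, w) ∈ usedArcs G A M}
      = #(Finset.image (fun w => (.inr (a, w) : Node V)) {w | (a, w) ∈ usedArcs G A M}) :=
        (card_image_of_injective _ fun w w' h => by simpa using h).symm
    _ = #(copies f {a}) := by
        refine (card_nbij (M ∘ .inl) (fun c hc => ?_) (fun c hc c' hc' h => ?_) fun y hy => ?_).symm
        · obtain ⟨w, hw, hMc⟩ := hM.apply_inl (hcA c hc)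
          obtain rfl : c.1 = a := by simpa using (mem_copies.1 hc).1
          simpa [hMc] using hw
        · exact Sum.inl_injective <|
            hM.injOn (inl_mem_disjSum.2 (hcA c hc)) (inl_mem_disjSum.2 (hcA c' hc')) h
        · obtain ⟨w, hw, rfl⟩ := mem_image.1 hy
          exact hM.exists_apply_inl_eq (mem_filter.1 hw).2
    _ = f a := by simp [card_copies]

theorem IsPerfectMatching.card_usedArcs_in (hM : IsPerfectMatching G A f M) {b : V}
    (hb : b ∉ A) : #{w | (w, b) ∈ usedArcs G A M} = f b := by
  have hbL : ∀ w, (w, b) ∈ usedArcs G A M → .inr (w, b) ∈ left G A f := fun w hw =>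
    inr_mem_disjSum.2 (mem_filter.1 hw).1
  calc #{w | (w, b) ∈ usedArcs G A M} = #((copies f {b}).image Sum.inl) := by
        refine card_nbij (fun w => M (.inr (w, b))) (fun w hw => ?_) (fun w hw w' hw' h => ?_)
          fun y hy => ?_
        · obtain ⟨c, hc, hMc⟩ := hM.apply_inr (mem_filter.1 hw).2
          exact mem_image.2 ⟨c, hc, hMc.symm⟩
        · simpa using hM.injOn (hbL w (mem_filter.1 hw).2) (hbL w' (mem_filter.1 hw').2) h
        · obtain ⟨c, hc, rfl⟩ := mem_image.1 hy
          obtain ⟨hcb, hcf⟩ : c.1 = b ∧ c.2 < f c.1 := by simpa using hc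
          obtain ⟨⟨u, w⟩, he, rfl, hMe⟩ :=
            hM.exists_apply_inr_eq (mem_copies.2 ⟨mem_compl.2 (hcb ▸ hb), hcf⟩)
          exact ⟨u, by simpa [← hcb] using he, by simpa [← hcb] using hMe⟩
    _ = f b := by rw [card_image_of_injective _ Sum.inl_injective, card_copies, sum_singleton]

theorem exists_isPerfectMatching (hbip : ∀ u v, G.Adj u v → (u ∈ A ↔ v ∉ A))
    (hsum : ∑ a ∈ A, f a = ∑ b ∈ Aᶜ, f b)
    (hX : ∀ X ⊆ A, ∑ x ∈ X, f x ≤ ∑ y, min (f y) #{x ∈ X | G.Adj x y}) :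
    ∃ M, IsPerfectMatching G A f M := by
  obtain ⟨g, hg_inj, hg_mem⟩ := exists_injective_of_forall_card_le_card_biUnion (left G A f)
    (nbr G f) fun s hs => card_le_card_biUnion_nbr hX hs
  let M : Node V → Node V := fun x => if hx : x ∈ left G A f then g ⟨x, hx⟩ else x
  have hM : ∀ x (hx : x ∈ left G A f), M x = g ⟨x, hx⟩ := fun x hx => dif_pos hx
  have hM_inj : Set.InjOn M (left G A f) := fun x hx y hy h => by
    rw [hM x hx, hM y hy] at h
    exact congrArg Subtype.val (hg_inj h)
  have hM_mem : ∀ x ∈ left G A f, M x ∈ nbr G f x := fun x hx => hM x hx ▸ hg_mem ⟨x, hx⟩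
  refine ⟨M, hM_inj, hM_mem, surjOn_of_injOn_of_card_le M (fun x hx => ?_) hM_inj ?_⟩
  · exact nbr_subset_right hbip x hx (hM_mem x hx)
  · exact (card_left_eq_card_right hsum).ge

end FactorGadget

variable {V : Type*} [Fintype V] {G : SimpleGraph V} [DecidableRel G.Adj] {f : V → ℕ}

theorem exists_factor_iff [DecidableEq V] {A : Finset V}
    (hbip : ∀ u v, G.Adj u v → (u ∈ A ↔ v ∉ A)) :
    (∃ H ≤ G, ∀ v, (H.neighborSet v).ncard = f v) ↔
      (∑ a ∈ A, f a = ∑ b ∈ Aᶜ, f b ∧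
        ∀ X ⊆ A, ∑ x ∈ X, f x ≤ ∑ y, min (f y) #{x ∈ X | G.Adj x y}) := by
  constructor
  · rintro ⟨H, hHG, hdeg⟩
    classical
    have hdeg' : ∀ v, #{w | H.Adj v w} = f v := fun v => by
      rw [← hdeg, ← Set.ncard_coe_finset]
      simp [neighborSet]
    exact ⟨sum_eq_sum_compl_of_factor hbip hHG hdeg',
      fun X _ => sum_le_sum_min_card_of_factor hHG hdeg' X⟩
  · rintro ⟨hsum, hX⟩
    obtain ⟨M, hM⟩ := FactorGadget.exists_isPerfectMatching hbip hsum hX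
    exact exists_factor_of_arcsFrom hbip (filter_subset _ _) (fun a => hM.card_usedArcs_out)
      fun b => hM.card_usedArcs_in

lemma finsum_min_ncard_eq_sum (X : Set V) [Fintype X] :
    ∑ᶠ y ∈ {y | ∃ x ∈ X, G.Adj x y}, min (f y) ((G.neighborSet y ∩ X).ncard) =
      ∑ y, min (f y) #{x ∈ X.toFinset | G.Adj x y} := by
  classical
  have hcard : ∀ y, (G.neighborSet y ∩ X).ncard = #{x ∈ X.toFinset | G.Adj x y} := fun y => by
    rw [← Set.ncard_coe_finset]
    congr 1
    ext x
    simp [adj_comm, and_comm]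
  simp_rw [hcard]
  rw [finsum_mem_eq_toFinset_sum, Set.toFinset_ofPred]
  refine sum_filter_of_ne fun y _ hy => ?_
  obtain ⟨x, hx⟩ := card_ne_zero.1 fun h => hy (by rw [h, _root_.min_zero])
  simp only [mem_filter, Set.mem_toFinset] at hx
  exact ⟨x, hx⟩

end SimpleGraph

open SimpleGraph

theorem stmt19 {V : Type*} [Fintype V] (G : SimpleGraph V) (A : Set V)
    (hbip : ∀ u v, G.Adj u v → (u ∈ A ↔ v ∉ A)) (f : V → ℕ) :
    (∃ H : SimpleGraph V, H ≤ G ∧ ∀ v, (H.neighborSet v).ncard = f v) ↔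
      ((∑ᶠ x ∈ A, f x) = (∑ᶠ y ∈ Aᶜ, f y) ∧
        ∀ X : Set V, X ⊆ A →
          (∑ᶠ x ∈ X, f x) ≤
            ∑ᶠ y ∈ {y | ∃ x ∈ X, G.Adj x y},
              min (f y) ((G.neighborSet y ∩ X).ncard)) := by
  classical
  have hbip' : ∀ u v, G.Adj u v → (u ∈ A.toFinset ↔ v ∉ A.toFinset) := by simpa using hbip
  rw [exists_factor_iff hbip', finsum_mem_eq_toFinset_sum, finsum_mem_eq_toFinset_sum,
    Set.toFinset_compl]
  refine and_congr_right fun _ => ⟨fun h X hX => ?_, fun h X hX => ?_⟩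
  · rw [finsum_mem_eq_toFinset_sum, finsum_min_ncard_eq_sum]
    exact h _ (Set.toFinset_subset_toFinset.2 hX)
  · have := h X (by simpa using hX)
    rwa [finsum_mem_coe_finset, finsum_min_ncard_eq_sum, toFinset_coe] at this
end
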